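/- arXiv:2505.18295 — 2 statements merged into one kernel-verified Lean document; each statement's English description precedes it below -/
import Mathlib

section
/- Let p be a permutation of length n written as p = LnR, where n is the maximum entry and L and R are both nonempty. Then s(p) = s(L)s(R)n avoids both 132 and 312 if and only if all of the following hold: s(L) avoids 132 and 312; s(R) avoids 132 and 312; every left-to-right maximum of s(R) other than the first entry of s(R) is greater than every entry of L; every left-to-right minimum of s(R) other than the first entry of s(R) is less than every entry of L; and the first entry of s(R) is either greater than every entry of L or less than every entry of L. -/
/-- The stack-sorting map `s`, implemented with a fuel parameter (the fuel
`l.length` always suffices, since the maximum of a nonempty list of naturals is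
attained, so both recursive calls are on strictly shorter lists).
`s(ε) = ε` and `s(LmR) = s(L) s(R) m` where `m` is the maximum entry. -/
def stackSortAux : ℕ → List ℕ → List ℕ
  | 0, _ => []
  | _ + 1, [] => []
  | fuel + 1, a :: t =>
      let m := (a :: t).foldr max 0
      stackSortAux fuel ((a :: t).takeWhile (fun x => x ≠ m)) ++
        stackSortAux fuel (((a :: t).dropWhile (fun x => x ≠ m)).tail) ++ [m]

/-- The stack-sorting map on finite sequences of (distinct) naturals. -/
def stackSort (l : List ℕ) : List ℕ := stackSortAux l.length l

/-- `l` is a permutation of `{1, 2, …, n}`, written in one-line notation. -/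
def IsPermList (n : ℕ) (l : List ℕ) : Prop :=
  l.Perm ((List.range n).map (· + 1))

/-- The sequence `p` contains the pattern `q`: there is a strictly increasing choice
of positions of `p` on which the entries compare exactly as the entries of `q` do. -/
def ContainsPat (p q : List ℕ) : Prop :=
  ∃ f : Fin q.length → Fin p.length, StrictMono f ∧
    ∀ i j : Fin q.length, q.get i < q.get j ↔ p.get (f i) < p.get (f j)

/-- The sequence `p` avoids the pattern `q`. -/
def AvoidsPat (p q : List ℕ) : Prop := ¬ ContainsPat p q

/-- The entry in position `i` of `l` is a left-to-right maximum: it is larger than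
every entry to its left. -/
def IsLTRMax (l : List ℕ) (i : Fin l.length) : Prop :=
  ∀ j : Fin l.length, j < i → l.get j < l.get i

/-- The entry in position `i` of `l` is a left-to-right minimum: it is smaller than
every entry to its left. -/
def IsLTRMin (l : List ℕ) (i : Fin l.length) : Prop :=
  ∀ j : Fin l.length, j < i → l.get i < l.get j

/-!
A sequence avoids both `132` and `312` exactly when no entry is straddled, i.e. lies strictly
between two earlier entries: every entry is a weak left-to-right maximum or minimum. In
`s(L) s(R) n` the final `n` is never straddled, so everything is decided by the entries of `s(R)`
against `s(L)` and their predecessors in `s(R)`. The first entry of `s(R)` must lie on one side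
of all of `L`. A later entry of `s(R)` that is not straddled inside `s(R)` is a left-to-right
maximum or minimum of `s(R)`, hence already has the first entry of `s(R)` below, resp. above,
it; so it is not straddled exactly when all of `L` lies below, resp. above, it.
-/

lemma List.foldr_max_zero_mem {l : List ℕ} (hl : l ≠ []) : l.foldr max 0 ∈ l :=
  List.maximum_mem (List.foldr_max_of_ne_nil hl).symm

lemma List.takeWhile_ne_append_cons_tail_dropWhile {α : Type*} [DecidableEq α] {l : List α}
    {m : α} (hm : m ∈ l) : l.takeWhile (· ≠ m) ++ m :: (l.dropWhile (· ≠ m)).tail = l := by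
  have hne : l.dropWhile (· ≠ m) ≠ [] := fun h => by
    simpa using List.dropWhile_eq_nil_iff.1 h m hm
  have hhead : (l.dropWhile (· ≠ m)).head hne = m := by
    simpa using List.head_dropWhile_not (fun x => decide (x ≠ m)) hne
  have h := List.takeWhile_append_dropWhile (p := (· ≠ m)) (l := l)
  rwa [← List.cons_head_tail hne, hhead] at h

lemma List.length_takeWhile_ne_add_length_tail_dropWhile {α : Type*} [DecidableEq α]
    {l : List α} {m : α} (hm : m ∈ l) :
    (l.takeWhile (· ≠ m)).length + (l.dropWhile (· ≠ m)).tail.length + 1 = l.length := by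
  conv_rhs => rw [← List.takeWhile_ne_append_cons_tail_dropWhile hm]
  simp only [List.length_append, List.length_cons, Nat.add_assoc]

lemma stackSortAux_succ {f : ℕ} {l : List ℕ} (h : l.length ≤ f) :
    stackSortAux (f + 1) l = stackSortAux f l := by
  induction f generalizing l with
  | zero => rw [List.length_eq_zero_iff.1 (Nat.le_zero.1 h)]; rfl
  | succ f ih =>
    match l with
    | [] => rfl
    | a :: t =>
      have hlen := List.length_takeWhile_ne_add_length_tail_dropWhile
        (List.foldr_max_zero_mem (List.cons_ne_nil a t))
      simp only [List.length_cons] at h hlen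
      simp only [stackSortAux]
      rw [ih (by omega), ih (by omega)]

lemma stackSortAux_eq_stackSort {f : ℕ} {l : List ℕ} (h : l.length ≤ f) :
    stackSortAux f l = stackSort l := by
  induction f, h using Nat.le_induction with
  | base => rfl
  | succ f hf ih => rw [stackSortAux_succ hf, ih]

lemma stackSort_eq_of_ne_nil {l : List ℕ} (hl : l ≠ []) :
    stackSort l = stackSort (l.takeWhile (· ≠ l.foldr max 0)) ++
      stackSort ((l.dropWhile (· ≠ l.foldr max 0)).tail) ++ [l.foldr max 0] := by
  obtain ⟨a, t, rfl⟩ := List.exists_cons_of_ne_nil hl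
  have hlen := List.length_takeWhile_ne_add_length_tail_dropWhile (List.foldr_max_zero_mem hl)
  simp only [List.length_cons] at hlen
  show stackSortAux (t.length + 1) (a :: t) = _
  simp only [stackSortAux]
  rw [stackSortAux_eq_stackSort (by omega), stackSortAux_eq_stackSort (by omega)]

lemma stackSort_perm (l : List ℕ) : (stackSort l).Perm l := by
  induction h : l.length using Nat.strong_induction_on generalizing l with
  | _ k ih =>
    subst h
    rcases eq_or_ne l [] with rfl | hl
    · rfl
    have hm := List.foldr_max_zero_mem hl
    have hlen := List.length_takeWhile_ne_add_length_tail_dropWhile hm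
    rw [stackSort_eq_of_ne_nil hl]
    refine (((ih _ (by omega) _ rfl).append (ih _ (by omega) _ rfl)).append_right _).trans ?_
    conv_rhs => rw [← List.takeWhile_ne_append_cons_tail_dropWhile hm]
    rw [List.append_assoc]
    exact (List.perm_append_singleton _ _).append_left _

lemma stackSort_append_cons {L R : List ℕ} {n : ℕ} (hmax : ∀ x ∈ L ++ n :: R, x ≤ n)
    (hn : n ∉ L) : stackSort (L ++ n :: R) = stackSort L ++ stackSort R ++ [n] := by
  have hM : (L ++ n :: R).foldr max 0 = n :=
    le_antisymm (List.max_le_of_forall_le _ _ hmax) (List.le_max_of_le (by simp) le_rfl)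
  have hL : ∀ x ∈ L, decide (x ≠ n) = true := fun x hx => by
    simpa using ne_of_mem_of_not_mem hx hn
  rw [stackSort_eq_of_ne_nil (by simp), hM, List.takeWhile_append_of_pos hL,
    List.dropWhile_append_of_pos hL]
  simp

lemma IsPermList.nodup {n : ℕ} {l : List ℕ} (h : IsPermList n l) : l.Nodup :=
  h.nodup_iff.2 (List.nodup_range.map fun _ _ => Nat.succ.inj)

lemma IsPermList.le_of_mem {n x : ℕ} {l : List ℕ} (h : IsPermList n l) (hx : x ∈ l) :
    x ≤ n := by
  obtain ⟨y, hy, rfl⟩ := List.mem_map.1 (h.mem_iff.1 hx)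
  exact List.mem_range.1 hy

lemma List.getElem_mem_take {α : Type*} {l : List α} {i n : ℕ} (hin : i < n)
    (hi : i < l.length) : l[i] ∈ l.take n :=
  List.mem_take_iff_getElem.2 ⟨i, by omega, rfl⟩

lemma List.Nodup.getElem_notMem_take {α : Type*} {l : List α} (hl : l.Nodup) {j : ℕ}
    (hj : j < l.length) : l[j] ∉ l.take j := by
  intro h
  obtain ⟨i, hi, he⟩ := List.mem_take_iff_getElem.1 h
  simp only [lt_min_iff] at hi
  exact hi.1.ne ((hl.getElem_inj_iff).1 he)

def Straddles (s : List ℕ) (c : ℕ) : Prop := ∃ a ∈ s, ∃ b ∈ s, a < c ∧ c < b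

def StraddleFree (l : List ℕ) : Prop := ∀ i (hi : i < l.length), ¬ Straddles (l.take i) l[i]

lemma Straddles.mono {s t : List ℕ} {c : ℕ} (hst : s ⊆ t) : Straddles s c → Straddles t c
  | ⟨a, ha, b, hb, hac, hcb⟩ => ⟨a, hst ha, b, hst hb, hac, hcb⟩

lemma not_straddles_iff_of_notMem {s : List ℕ} {c : ℕ} (hc : c ∉ s) :
    ¬ Straddles s c ↔ (∀ x ∈ s, x < c) ∨ (∀ x ∈ s, c < x) := by
  have hne : ∀ x ∈ s, x ≠ c := fun x hx => ne_of_mem_of_not_mem hx hc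
  simp only [Straddles, not_exists, not_and]
  constructor
  · intro h
    by_contra! hcon
    obtain ⟨⟨a, ha, hca⟩, ⟨b, hb, hbc⟩⟩ := hcon
    exact h b hb a ha (hbc.lt_of_ne (hne b hb)) (hca.lt_of_ne (hne a ha).symm)
  · rintro (h | h) a ha b hb hac hcb
    · exact (h b hb).asymm hcb
    · exact (h a ha).asymm hac

lemma ContainsPat.not_straddleFree {p q : List ℕ} (h : ContainsPat p q)
    (hq : ¬ StraddleFree q) : ¬ StraddleFree p := by
  obtain ⟨f, hf, hcmp⟩ := h
  simp only [StraddleFree, not_forall, not_not] at hq ⊢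
  obtain ⟨k, hk, _, ha, _, hb, hak, hkb⟩ := hq
  obtain ⟨i, hi, rfl⟩ := List.mem_take_iff_getElem.1 ha
  obtain ⟨j, hj, rfl⟩ := List.mem_take_iff_getElem.1 hb
  have hik : f ⟨i, by omega⟩ < f ⟨k, hk⟩ := hf (Fin.mk_lt_mk.2 (by omega))
  have hjk : f ⟨j, by omega⟩ < f ⟨k, hk⟩ := hf (Fin.mk_lt_mk.2 (by omega))
  exact ⟨f ⟨k, hk⟩, (f ⟨k, hk⟩).isLt, _, List.getElem_mem_take hik _, _,
    List.getElem_mem_take hjk _, (hcmp _ _).1 hak, (hcmp _ _).1 hkb⟩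

lemma containsPat_132_or_312_of_not_straddleFree {p : List ℕ} (h : ¬ StraddleFree p) :
    ContainsPat p [1, 3, 2] ∨ ContainsPat p [3, 1, 2] := by
  simp only [StraddleFree, not_forall, not_not] at h
  obtain ⟨k, hk, _, ha, _, hb, hak, hkb⟩ := h
  obtain ⟨i, hi, rfl⟩ := List.mem_take_iff_getElem.1 ha
  obtain ⟨j, hj, rfl⟩ := List.mem_take_iff_getElem.1 hb
  simp only [lt_min_iff] at hi hj
  rcases lt_trichotomy i j with hij | rfl | hji
  · refine Or.inl ⟨![⟨i, hi.2⟩, ⟨j, hj.2⟩, ⟨k, hk⟩],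
      Fin.strictMono_iff_lt_succ.2 ?_, ?_⟩
    · intro t; fin_cases t <;> simp [Fin.lt_def] <;> omega
    · intro t u; fin_cases t <;> fin_cases u <;> simp <;> omega
  · exact absurd (hak.trans hkb) (lt_irrefl _)
  · refine Or.inr ⟨![⟨j, hj.2⟩, ⟨i, hi.2⟩, ⟨k, hk⟩],
      Fin.strictMono_iff_lt_succ.2 ?_, ?_⟩
    · intro t; fin_cases t <;> simp [Fin.lt_def] <;> omega
    · intro t u; fin_cases t <;> fin_cases u <;> simp <;> omega

lemma not_straddleFree_132 : ¬ StraddleFree [1, 3, 2] :=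
  fun h => h 2 (by simp) ⟨1, by simp, 3, by simp, by simp, by simp⟩

lemma not_straddleFree_312 : ¬ StraddleFree [3, 1, 2] :=
  fun h => h 2 (by simp) ⟨1, by simp, 3, by simp, by simp, by simp⟩

lemma avoidsPat_132_and_312_iff (p : List ℕ) :
    AvoidsPat p [1, 3, 2] ∧ AvoidsPat p [3, 1, 2] ↔ StraddleFree p := by
  refine ⟨fun ⟨h132, h312⟩ => by_contra fun h => ?_, fun h => ⟨?_, ?_⟩⟩
  · exact (containsPat_132_or_312_of_not_straddleFree h).elim h132 h312
  · exact fun h132 => h132.not_straddleFree not_straddleFree_132 h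
  · exact fun h312 => h312.not_straddleFree not_straddleFree_312 h

lemma straddleFree_append {A B : List ℕ} :
    StraddleFree (A ++ B) ↔
      StraddleFree A ∧ ∀ j (hj : j < B.length), ¬ Straddles (A ++ B.take j) B[j] := by
  have left : ∀ i (hi : i < A.length),
      ¬ Straddles ((A ++ B).take i) ((A ++ B)[i]'(by simp; omega)) ↔
        ¬ Straddles (A.take i) A[i] := fun i hi => by
    rw [List.take_append_of_le_length hi.le, List.getElem_append_left hi]
  have right : ∀ j (hj : j < B.length),
      ¬ Straddles ((A ++ B).take (A.length + j)) ((A ++ B)[A.length + j]'(by simp; omega)) ↔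
        ¬ Straddles (A ++ B.take j) B[j] := fun j hj => by
    simp only [List.take_append, List.take_of_length_le (Nat.le_add_right _ _),
      Nat.add_sub_cancel_left, List.getElem_append_right (Nat.le_add_right _ _)]
  constructor
  · intro h
    exact ⟨fun i hi => (left i hi).1 (h i _), fun j hj => (right j hj).1 (h _ _)⟩
  · rintro ⟨hA, hB⟩ i hi
    rcases lt_or_ge i A.length with hiA | hiA
    · exact (left i hiA).2 (hA i hiA)
    · obtain ⟨j, rfl⟩ := Nat.exists_eq_add_of_le hiA
      exact (right j (by simp at hi; omega)).2 (hB j _)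

lemma straddleFree_append_singleton {X : List ℕ} {n : ℕ} (h : ∀ x ∈ X, x ≤ n) :
    StraddleFree (X ++ [n]) ↔ StraddleFree X := by
  rw [straddleFree_append, and_iff_left_iff_imp]
  rintro - j hj ⟨a, _, b, hb, _, hnb⟩
  simp only [List.length_singleton, Nat.lt_one_iff] at hj
  subst hj
  simp only [List.take_zero, List.append_nil, List.getElem_singleton] at hb hnb
  exact (h b hb).not_gt hnb

lemma isLTRMax_iff {l : List ℕ} {i : Fin l.length} :
    IsLTRMax l i ↔ ∀ x ∈ l.take i, x < l[i] := by
  simp only [IsLTRMax, List.mem_take_iff_getElem, lt_min_iff]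
  constructor
  · rintro h _ ⟨j, hj, rfl⟩
    exact h ⟨j, hj.2⟩ hj.1
  · intro h j hj
    exact h _ ⟨j, ⟨hj, j.isLt⟩, rfl⟩

lemma isLTRMin_iff {l : List ℕ} {i : Fin l.length} :
    IsLTRMin l i ↔ ∀ x ∈ l.take i, l[i] < x := by
  simp only [IsLTRMin, List.mem_take_iff_getElem, lt_min_iff]
  constructor
  · rintro h _ ⟨j, hj, rfl⟩
    exact h ⟨j, hj.2⟩ hj.1
  · intro h j hj
    exact h _ ⟨j, ⟨hj, j.isLt⟩, rfl⟩

lemma straddleFree_append_iff {A B : List ℕ} (hB : B ≠ []) (hAB : (A ++ B).Nodup) :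
    StraddleFree (A ++ B) ↔ StraddleFree A ∧ StraddleFree B ∧
      (∀ i : Fin B.length, i.val ≠ 0 → IsLTRMax B i → ∀ x ∈ A, x < B.get i) ∧
      (∀ i : Fin B.length, i.val ≠ 0 → IsLTRMin B i → ∀ x ∈ A, B.get i < x) ∧
      ((∀ x ∈ A, x < B.headI) ∨ (∀ x ∈ A, B.headI < x)) := by
  obtain ⟨-, hBnd, hdisj⟩ := List.nodup_append.1 hAB
  have hB0 : 0 < B.length := List.length_pos_iff.2 hB
  have hheadI : B.headI = B[0] := by cases B <;> simp_all
  have hnotA : ∀ j (hj : j < B.length), B[j] ∉ A := fun j hj h =>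
    hdisj _ h _ (List.getElem_mem hj) rfl
  have hnot : ∀ j (hj : j < B.length), B[j] ∉ A ++ B.take j := fun j hj h =>
    (List.mem_append.1 h).elim (hnotA j hj) (hBnd.getElem_notMem_take hj)
  rw [straddleFree_append, hheadI]
  refine and_congr_right fun _ => ⟨fun h => ⟨?_, ?_, ?_, ?_⟩, ?_⟩
  · exact fun j hj hs => h j hj (hs.mono (List.subset_append_right _ _))
  · intro i hi0 hmax x hx
    refine (lt_or_gt_of_ne (ne_of_mem_of_not_mem hx (hnotA i i.isLt))).resolve_right fun hix =>
      h i i.isLt ⟨B[0], ?_, x, List.mem_append_left _ hx, hmax ⟨0, hB0⟩ ?_, hix⟩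
    · exact List.mem_append_right _ (List.getElem_mem_take (Nat.pos_of_ne_zero hi0) hB0)
    · exact Fin.mk_lt_of_lt_val (Nat.pos_of_ne_zero hi0)
  · intro i hi0 hmin x hx
    refine (lt_or_gt_of_ne (ne_of_mem_of_not_mem hx (hnotA i i.isLt))).resolve_left fun hxi =>
      h i i.isLt ⟨x, List.mem_append_left _ hx, B[0], ?_, hxi, hmin ⟨0, hB0⟩ ?_⟩
    · exact List.mem_append_right _ (List.getElem_mem_take (Nat.pos_of_ne_zero hi0) hB0)
    · exact Fin.mk_lt_of_lt_val (Nat.pos_of_ne_zero hi0)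
  · simpa using (not_straddles_iff_of_notMem (hnot 0 hB0)).1 (h 0 hB0)
  · rintro ⟨hBsf, hmax, hmin, hhead⟩ j hj
    rw [not_straddles_iff_of_notMem (hnot j hj)]
    rcases Nat.eq_zero_or_pos j with rfl | hj0
    · simpa using hhead
    rcases (not_straddles_iff_of_notMem (hBnd.getElem_notMem_take hj)).1 (hBsf j hj)
      with hlt | hgt
    · have hA := hmax ⟨j, hj⟩ hj0.ne' (isLTRMax_iff.2 hlt)
      exact Or.inl fun x hx => (List.mem_append.1 hx).elim (hA x) (hlt x)
    · have hA := hmin ⟨j, hj⟩ hj0.ne' (isLTRMin_iff.2 hgt)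
      exact Or.inr fun x hx => (List.mem_append.1 hx).elim (hA x) (hgt x)

theorem av132_312_split_general (n : ℕ) (L R : List ℕ) (hR : R ≠ [])
    (hp : IsPermList n (L ++ n :: R)) :
    stackSort (L ++ n :: R) = stackSort L ++ stackSort R ++ [n] ∧
    ((AvoidsPat (stackSort (L ++ n :: R)) [1, 3, 2] ∧
        AvoidsPat (stackSort (L ++ n :: R)) [3, 1, 2]) ↔
      (AvoidsPat (stackSort L) [1, 3, 2] ∧ AvoidsPat (stackSort L) [3, 1, 2] ∧
       AvoidsPat (stackSort R) [1, 3, 2] ∧ AvoidsPat (stackSort R) [3, 1, 2] ∧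
       (∀ i : Fin (stackSort R).length, i.val ≠ 0 → IsLTRMax (stackSort R) i →
          ∀ x ∈ L, x < (stackSort R).get i) ∧
       (∀ i : Fin (stackSort R).length, i.val ≠ 0 → IsLTRMin (stackSort R) i →
          ∀ x ∈ L, (stackSort R).get i < x) ∧
       ((∀ x ∈ L, x < (stackSort R).headI) ∨ (∀ x ∈ L, (stackSort R).headI < x)))) := by
  have hle : ∀ x ∈ L ++ n :: R, x ≤ n := fun x hx => hp.le_of_mem hx
  have hnL : n ∉ L := fun h => List.nodup_append.1 hp.nodup |>.2.2 n h n (by simp) rfl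
  have hsplit := stackSort_append_cons hle hnL
  refine ⟨hsplit, ?_⟩
  have hLR : (L ++ R).Sublist (L ++ n :: R) := (List.sublist_cons_self n R).append_left L
  have hperm := (stackSort_perm L).append (stackSort_perm R)
  have hsR : stackSort R ≠ [] := fun h => hR (h ▸ stackSort_perm R).symm.eq_nil
  rw [hsplit, avoidsPat_132_and_312_iff,
    straddleFree_append_singleton fun x hx => hle x (hLR.subset (hperm.subset hx)),
    straddleFree_append_iff hsR (hperm.nodup_iff.2 (hp.nodup.sublist hLR))]
  simp only [← avoidsPat_132_and_312_iff, and_assoc, (stackSort_perm L).mem_iff]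

/-- let `p = L n R` be a permutation of length `n` (so `n` is its
maximum entry) with `L, R` nonempty. Then `s(p) = s(L) s(R) n`, and `s(p)` avoids
both `132` and `312` if and only if: `s(L)` avoids `132` and `312`; `s(R)` avoids
`132` and `312`; every left-to-right maximum of `s(R)` other than its first entry is
greater than every entry of `L`; every left-to-right minimum of `s(R)` other than its
first entry is less than every entry of `L`; and the first entry of `s(R)` is either
greater than every entry of `L` or less than every entry of `L`. -/
theorem av132_312_split (n : ℕ) (L R : List ℕ) (hL : L ≠ []) (hR : R ≠ [])
    (hp : IsPermList n (L ++ n :: R)) :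
    stackSort (L ++ n :: R) = stackSort L ++ stackSort R ++ [n] ∧
    ((AvoidsPat (stackSort (L ++ n :: R)) [1, 3, 2] ∧
        AvoidsPat (stackSort (L ++ n :: R)) [3, 1, 2]) ↔
      (AvoidsPat (stackSort L) [1, 3, 2] ∧ AvoidsPat (stackSort L) [3, 1, 2] ∧
       AvoidsPat (stackSort R) [1, 3, 2] ∧ AvoidsPat (stackSort R) [3, 1, 2] ∧
       (∀ i : Fin (stackSort R).length, i.val ≠ 0 → IsLTRMax (stackSort R) i →
          ∀ x ∈ L, x < (stackSort R).get i) ∧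
       (∀ i : Fin (stackSort R).length, i.val ≠ 0 → IsLTRMin (stackSort R) i →
          ∀ x ∈ L, (stackSort R).get i < x) ∧
       ((∀ x ∈ L, x < (stackSort R).headI) ∨ (∀ x ∈ L, (stackSort R).headI < x)))) :=
  av132_312_split_general n L R hR hp
end

section
/- Let n ≥ 2 and let p' be a permutation of {1, 2, …, n−1} such that s(p') avoids both 132 and 312. Then the two permutations of length n obtained by prepending the entry n to p' and by appending the entry n to p' both have the property that their stack-sorted image avoids 132 and 312; moreover, distinct choices of p' and of prepend/append give distinct permutations, so this construction contributes exactly 2·|s^{-1}(Av_{n-1}(132,312))| permutations of length n whose stack-sorted image avoids 132 and 312 and in which n is the first or last entry. -/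
/-!
Since `n` exceeds every entry of `p'`, the stack-sorting map gives
`s(n p') = s(p') n = s(p' n)`. Appending a new maximum to a sequence cannot create an occurrence
of `132` or `312`, because in both patterns the last entry is not the largest. So `s(n p')` and
`s(p' n)` avoid both patterns exactly when `s(p')` does, and the permutations of length `n`
beginning or ending with `n` form two disjoint copies of `s⁻¹(Av_{n-1}(132, 312))`.
-/

lemma foldr_max_eq_of_mem {l : List ℕ} {m : ℕ} (hm : m ∈ l) (h : ∀ x ∈ l, x ≤ m) :
    l.foldr max 0 = m :=
  le_antisymm (List.max_le_of_forall_le l m h) (List.le_max_of_le hm le_rfl)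

lemma foldr_max_mem {l : List ℕ} (h : l ≠ []) : l.foldr max 0 ∈ l :=
  List.maximum_mem (List.foldr_max_of_ne_nil h).symm

@[simp]
lemma stackSortAux_nil (fuel : ℕ) : stackSortAux fuel [] = [] := by
  cases fuel <;> rfl

lemma stackSort_cons_of_forall_lt {l : List ℕ} {n : ℕ} (h : ∀ x ∈ l, x < n) :
    stackSort (n :: l) = stackSort l ++ [n] := by
  have hmax : (n :: l).foldr max 0 = n :=
    foldr_max_eq_of_mem List.mem_cons_self (by simpa using fun x hx => (h x hx).le)
  simp [stackSort, stackSortAux, hmax]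

lemma stackSort_append_singleton_of_forall_lt {l : List ℕ} {n : ℕ} (h : ∀ x ∈ l, x < n) :
    stackSort (l ++ [n]) = stackSort l ++ [n] := by
  obtain _ | ⟨a, t⟩ := l
  · exact stackSort_cons_of_forall_lt h
  have hmax : (a :: t ++ [n]).foldr max 0 = n :=
    foldr_max_eq_of_mem (by simp) fun x hx => by
      rcases List.mem_append.mp hx with hx | hx
      exacts [(h x hx).le, (List.mem_singleton.mp hx).le]
  have hne : ∀ x ∈ a :: t, decide (x ≠ n) = true := fun x hx => by simpa using (h x hx).ne
  rw [stackSort, List.length_append, List.length_cons, List.length_singleton, List.cons_append,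
    stackSortAux, ← List.cons_append, hmax, List.takeWhile_append_of_pos hne,
    List.dropWhile_append_of_pos hne]
  simp [stackSort]

lemma mem_of_mem_stackSortAux {x : ℕ} :
    ∀ {fuel : ℕ} {l : List ℕ}, x ∈ stackSortAux fuel l → x ∈ l
  | 0, _, hx => by simp [stackSortAux] at hx
  | _ + 1, [], hx => by simp at hx
  | fuel + 1, a :: t, hx => by
    rw [stackSortAux] at hx
    simp only [List.mem_append, List.mem_singleton] at hx
    rcases hx with (hx | hx) | rfl
    · exact List.takeWhile_subset _ (mem_of_mem_stackSortAux hx)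
    · exact List.dropWhile_subset _ (List.mem_of_mem_tail (mem_of_mem_stackSortAux hx))
    · exact foldr_max_mem (List.cons_ne_nil a t)

lemma mem_of_mem_stackSort {x : ℕ} {l : List ℕ} (hx : x ∈ stackSort l) : x ∈ l :=
  mem_of_mem_stackSortAux hx

lemma ContainsPat.append {l q : List ℕ} (r : List ℕ) (h : ContainsPat l q) :
    ContainsPat (l ++ r) q := by
  obtain ⟨f, hf, hcmp⟩ := h
  refine ⟨fun i => (f i).castLE (by simp), fun i j hij => hf hij, fun i j => ?_⟩
  simpa [List.getElem_append_left] using hcmp i j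

lemma ContainsPat.of_append_singleton {l q : List ℕ} {n : ℕ} (hl : ∀ x ∈ l, x < n)
    (k i : Fin q.length) (hk : (k : ℕ) + 1 = q.length) (hki : q.get k < q.get i)
    (h : ContainsPat (l ++ [n]) q) : ContainsPat l q := by
  obtain ⟨f, hf, hcmp⟩ := h
  have hle_k : ∀ j : Fin q.length, j ≤ k := fun j => Fin.le_def.mpr (by omega)
  have hfk : (f k : ℕ) < l.length := by
    by_contra! hge
    have hfk_eq : (f k : ℕ) = l.length := by have := (f k).isLt; simp at this; omega
    have hfi : (f i : ℕ) < l.length :=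
      hfk_eq ▸ Fin.lt_def.mp (hf (lt_of_le_of_ne (hle_k i) (by rintro rfl; exact hki.false)))
    have hlt : n < l[f i] := by
      simpa [hfk_eq, List.getElem_append_left hfi] using (hcmp k i).mp hki
    exact (hl _ (List.getElem_mem hfi)).not_gt hlt
  have hf_lt : ∀ j, (f j : ℕ) < l.length := fun j =>
    (Fin.le_def.mp (hf.monotone (hle_k j))).trans_lt hfk
  refine ⟨fun j => ⟨f j, hf_lt j⟩, fun a b hab => hf hab, fun a b => ?_⟩
  simpa [List.getElem_append_left (hf_lt a), List.getElem_append_left (hf_lt b)] using hcmp a b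

lemma avoidsPat_append_singleton_iff {l q : List ℕ} {n : ℕ} (hl : ∀ x ∈ l, x < n)
    (k i : Fin q.length) (hk : (k : ℕ) + 1 = q.length) (hki : q.get k < q.get i) :
    AvoidsPat (l ++ [n]) q ↔ AvoidsPat l q :=
  not_congr ⟨ContainsPat.of_append_singleton hl k i hk hki, ContainsPat.append [n]⟩

lemma avoids132_312_append_singleton_iff {l : List ℕ} {n : ℕ} (hl : ∀ x ∈ l, x < n) :
    (AvoidsPat (l ++ [n]) [1, 3, 2] ∧ AvoidsPat (l ++ [n]) [3, 1, 2]) ↔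
      (AvoidsPat l [1, 3, 2] ∧ AvoidsPat l [3, 1, 2]) :=
  and_congr (avoidsPat_append_singleton_iff hl 2 1 rfl (by decide))
    (avoidsPat_append_singleton_iff hl 2 0 rfl (by decide))

lemma IsPermList.forall_lt {m : ℕ} {l : List ℕ} (h : IsPermList m l) : ∀ x ∈ l, x < m + 1 := by
  intro x hx
  obtain ⟨k, hk, rfl⟩ := List.mem_map.mp (h.subset hx)
  simpa using List.mem_range.mp hk

lemma IsPermList.length_eq {m : ℕ} {l : List ℕ} (h : IsPermList m l) : l.length = m := by
  simpa using List.Perm.length_eq h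

lemma isPermList_succ_append_singleton_iff {m : ℕ} {l : List ℕ} :
    IsPermList (m + 1) (l ++ [m + 1]) ↔ IsPermList m l := by
  simp [IsPermList, List.range_succ, List.perm_append_right_iff]

lemma isPermList_succ_cons_iff {m : ℕ} {l : List ℕ} :
    IsPermList (m + 1) ((m + 1) :: l) ↔ IsPermList m l :=
  ((List.perm_append_singleton _ l).congr_left _).symm.trans
    isPermList_succ_append_singleton_iff

lemma finite_setOf_isPermList (m : ℕ) : {l : List ℕ | IsPermList m l}.Finite :=
  Set.Finite.ofFinset ((List.range m).map (· + 1)).permutations.toFinset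
    fun l => by simp [List.mem_permutations, IsPermList]

lemma IsPermList.cons_ne_append_singleton {m : ℕ} {l₂ : List ℕ} (hm : 1 ≤ m)
    (h₂ : IsPermList m l₂) (l₁ : List ℕ) : (m + 1) :: l₁ ≠ l₂ ++ [m + 1] := by
  obtain ⟨b, t, rfl⟩ := List.exists_cons_of_length_pos (h₂.length_eq ▸ hm)
  rintro ⟨⟩
  exact lt_irrefl _ (h₂.forall_lt _ List.mem_cons_self)

lemma card_isPermList_succ_head_or_getLast_eq {m : ℕ} (hm : 1 ≤ m) (P : List ℕ → Prop)
    (hP : ∀ l : List ℕ, (∀ x ∈ l, x < m + 1) → (P (l ++ [m + 1]) ↔ P l)) :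
    Nat.card {p : List ℕ // IsPermList (m + 1) p ∧ P (stackSort p) ∧
        (p.head? = some (m + 1) ∨ p.getLast? = some (m + 1))} =
      2 * Nat.card {p : List ℕ // IsPermList m p ∧ P (stackSort p)} := by
  set S := {p : List ℕ | IsPermList m p ∧ P (stackSort p)}
  have hP_stackSort : ∀ t, IsPermList m t → (P (stackSort t ++ [m + 1]) ↔ P (stackSort t)) :=
    fun t ht => hP _ fun x hx => ht.forall_lt x (mem_of_mem_stackSort hx)
  have hcons : ∀ t, (IsPermList (m + 1) ((m + 1) :: t) ∧ P (stackSort ((m + 1) :: t))) ↔ t ∈ S :=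
    fun t => by
      rw [isPermList_succ_cons_iff]
      exact and_congr_right fun ht => by
        rw [stackSort_cons_of_forall_lt ht.forall_lt, hP_stackSort t ht]
  have happend : ∀ t, (IsPermList (m + 1) (t ++ [m + 1]) ∧ P (stackSort (t ++ [m + 1]))) ↔
      t ∈ S := fun t => by
    rw [isPermList_succ_append_singleton_iff]
    exact and_congr_right fun ht => by
      rw [stackSort_append_singleton_of_forall_lt ht.forall_lt, hP_stackSort t ht]
  have hset : {p : List ℕ | IsPermList (m + 1) p ∧ P (stackSort p) ∧
      (p.head? = some (m + 1) ∨ p.getLast? = some (m + 1))} =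
      List.cons (m + 1) '' S ∪ (· ++ [m + 1]) '' S := by
    ext p
    simp only [Set.mem_ofPred_eq, List.head?_eq_some_iff, List.getLast?_eq_some_iff,
      Set.mem_union, Set.mem_image]
    constructor
    · rintro ⟨hp, hPp, ⟨t, rfl⟩ | ⟨t, rfl⟩⟩
      · exact Or.inl ⟨t, (hcons t).1 ⟨hp, hPp⟩, rfl⟩
      · exact Or.inr ⟨t, (happend t).1 ⟨hp, hPp⟩, rfl⟩
    · rintro (⟨t, ht, rfl⟩ | ⟨t, ht, rfl⟩)
      · exact ⟨((hcons t).2 ht).1, ((hcons t).2 ht).2, Or.inl ⟨t, rfl⟩⟩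
      · exact ⟨((happend t).2 ht).1, ((happend t).2 ht).2, Or.inr ⟨t, rfl⟩⟩
  have hdisj : Disjoint (List.cons (m + 1) '' S) ((· ++ [m + 1]) '' S) := by
    refine Set.disjoint_left.2 ?_
    rintro _ ⟨t₁, -, rfl⟩ ⟨t₂, ht₂, h⟩
    exact ht₂.1.cons_ne_append_singleton hm t₁ h.symm
  have hfin : S.Finite := (finite_setOf_isPermList m).subset fun p hp => hp.1
  rw [← Set.coe_ofPred, ← Set.coe_ofPred, Nat.card_coe_set_eq, Nat.card_coe_set_eq, hset,
    Set.ncard_union_eq hdisj (hfin.image _) (hfin.image _),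
    Set.ncard_image_of_injective _ List.cons_injective,
    Set.ncard_image_of_injective _ (List.append_left_injective _), two_mul]

/-- let `n ≥ 2` and let `p'` be a permutation of `{1, …, n-1}`
with `s(p')` avoiding both `132` and `312`. Then prepending and appending the
entry `n` to `p'` both yield permutations whose stack-sorted image avoids `132`
and `312`; distinct choices of `p'` and of prepend/append give distinct
permutations, and this construction contributes exactly
`2·|s⁻¹(Av_{n-1}(132, 312))|` permutations of length `n` whose stack-sorted
image avoids `132` and `312` and in which `n` is the first or last entry. -/
theorem prepend_append_av132_312 (n : ℕ) (hn : 2 ≤ n) :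
    (∀ p' : List ℕ, IsPermList (n - 1) p' →
      AvoidsPat (stackSort p') [1,3,2] → AvoidsPat (stackSort p') [3, 1, 2] →
        (AvoidsPat (stackSort (n :: p')) [1,3,2] ∧
          AvoidsPat (stackSort (n :: p')) [3, 1, 2]) ∧
        (AvoidsPat (stackSort (p' ++ [n])) [1,3,2] ∧
          AvoidsPat (stackSort (p' ++ [n])) [3, 1, 2])) ∧
    (∀ p₁ p₂ : List ℕ, IsPermList (n - 1) p₁ → IsPermList (n - 1) p₂ →
      n :: p₁ ≠ p₂ ++ [n]) ∧
    Nat.card {p : List ℕ // IsPermList n p ∧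
        AvoidsPat (stackSort p) [1,3,2] ∧ AvoidsPat (stackSort p) [3, 1, 2] ∧
        (p.head? = some n ∨ p.getLast? = some n)} =
      2 * Nat.card {p' : List ℕ // IsPermList (n - 1) p' ∧
        AvoidsPat (stackSort p') [1,3,2] ∧ AvoidsPat (stackSort p') [3, 1, 2]} := by
  obtain ⟨m, rfl⟩ : ∃ m, n = m + 1 := ⟨n - 1, by omega⟩
  have hm : 1 ≤ m := by omega
  rw [Nat.add_sub_cancel]
  refine ⟨fun p hp h132 h312 => ?_, fun p₁ p₂ _ hp₂ => hp₂.cons_ne_append_singleton hm p₁, ?_⟩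
  · have hsorted := (avoids132_312_append_singleton_iff
      fun x hx => hp.forall_lt x (mem_of_mem_stackSort hx)).2 ⟨h132, h312⟩
    rw [stackSort_cons_of_forall_lt hp.forall_lt,
      stackSort_append_singleton_of_forall_lt hp.forall_lt]
    exact ⟨hsorted, hsorted⟩
  · simpa only [and_assoc] using card_isPermList_succ_head_or_getLast_eq hm
      (fun l => AvoidsPat l [1, 3, 2] ∧ AvoidsPat l [3, 1, 2])
      fun l hl => avoids132_312_append_singleton_iff hl
end
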